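/- arXiv:2605.09337 — 2 statements merged into one kernel-verified Lean document; each statement's English description precedes it below -/
import Mathlib

section
/- Let β_n = C_b(n+1)^{-b} with b ∈ (0,1), C_b > 0, and P_n = C_p(1+n)^{-p} with C_p > 0, p > 0. Define S_n = Σ_{i=0}^{n} (∏_{k=i+1}^{n} (1-β_k)) P_i. Then for every r > 0, S_n ≤ 3·C_p·2^p·(n+1)^b / (C_b·(n+2)^p) + o((n+1)^{-r}); i.e., there exists N and a sequence ε_n → 0 with (n+1)^r ε_n → 0 such that S_n ≤ 3 C_p 2^p (n+1)^b/(C_b (n+2)^p) + ε_n for all n ≥ N. -/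
open Filter

private lemma telescope_le_one (β : ℕ → ℝ) (h0 : ∀ k, 0 ≤ β k) (h1 : ∀ k, β k ≤ 1) :
    ∀ n, ∑ i ∈ Finset.range (n + 1), (∏ k ∈ Finset.Icc (i + 1) n, (1 - β k)) * β i ≤ 1 := by
  intro n
  induction n with
  | zero => simpa using h1 0
  | succ n ih =>
    rw [Finset.sum_range_succ]
    have h2 : ∀ i ∈ Finset.range (n + 1),
        (∏ k ∈ Finset.Icc (i + 1) (n + 1), (1 - β k)) * β i
          = ((∏ k ∈ Finset.Icc (i + 1) n, (1 - β k)) * β i) * (1 - β (n + 1)) := by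
      intro i hi
      have hi' := Finset.mem_range.mp hi
      rw [Finset.prod_Icc_succ_top (by omega)]
      ring
    rw [Finset.sum_congr rfl h2, ← Finset.sum_mul]
    have he : Finset.Icc (n + 1 + 1) (n + 1) = (∅ : Finset ℕ) := by
      apply Finset.Icc_eq_empty; omega
    rw [he]
    simp only [Finset.prod_empty, one_mul]
    have hTnonneg : 0 ≤ ∑ i ∈ Finset.range (n + 1),
        (∏ k ∈ Finset.Icc (i + 1) n, (1 - β k)) * β i := by
      apply Finset.sum_nonneg
      intro i _
      exact mul_nonneg (Finset.prod_nonneg fun k _ => by linarith [h1 k]) (h0 i)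
    nlinarith [h0 (n + 1), h1 (n + 1)]

private lemma aux_tendsto (s c e : ℝ) (hc : 0 < c) (he : 0 < e) :
    Tendsto (fun n : ℕ => ((n : ℝ) + 1) ^ s * Real.exp (-(c * ((n : ℝ) + 1) ^ e)))
      atTop (nhds 0) := by
  have h1 : Tendsto (fun x : ℝ => x ^ (s / e) * Real.exp (-c * x)) atTop (nhds 0) :=
    tendsto_rpow_mul_exp_neg_mul_atTop_nhds_zero _ _ hc
  have h2 : Tendsto (fun n : ℕ => ((n : ℝ) + 1) ^ e) atTop atTop :=
    (tendsto_rpow_atTop he).comp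
      (tendsto_atTop_add_const_right _ 1 tendsto_natCast_atTop_atTop)
  refine (h1.comp h2).congr fun n => ?_
  have hpos : (0 : ℝ) ≤ (n : ℝ) + 1 := by positivity
  simp only [Function.comp_apply]
  rw [← Real.rpow_mul hpos, neg_mul]
  congr 2
  field_simp

theorem stmt_5 (b C_b p C_p : ℝ) (hb0 : 0 < b) (hb1 : b < 1) (hCb : 0 < C_b)
    (hp : 0 < p) (hCp : 0 < C_p)
    (β P : ℕ → ℝ)
    (hβ : ∀ n, β n = C_b * ((n : ℝ) + 1) ^ (-b))
    (hβ1 : ∀ n, β n < 1)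
    (hP : ∀ n, P n = C_p * (1 + (n : ℝ)) ^ (-p))
    (S : ℕ → ℝ)
    (hS : ∀ n, S n = ∑ i ∈ Finset.range (n + 1),
      (∏ k ∈ Finset.Icc (i + 1) n, (1 - β k)) * P i)
    (r : ℝ) (hr : 0 < r) :
    ∃ (N : ℕ) (ε : ℕ → ℝ),
      Tendsto ε atTop (nhds 0) ∧
      Tendsto (fun n : ℕ => ((n : ℝ) + 1) ^ r * ε n) atTop (nhds 0) ∧
      ∀ n ≥ N, S n ≤ 3 * C_p * 2 ^ p * ((n : ℝ) + 1) ^ b / (C_b * ((n : ℝ) + 2) ^ p) + ε n := by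
  have hβpos : ∀ k, 0 < β k := fun k => by rw [hβ]; positivity
  have hβ0 : ∀ k, 0 ≤ β k := fun k => (hβpos k).le
  have hβmono : ∀ i n : ℕ, i ≤ n → β n ≤ β i := by
    intro i n hin
    rw [hβ, hβ]
    refine mul_le_mul_of_nonneg_left ?_ hCb.le
    refine Real.rpow_le_rpow_of_nonpos (by positivity) ?_ (neg_nonpos.mpr hb0.le)
    have : (i : ℝ) ≤ (n : ℝ) := by exact_mod_cast hin
    linarith
  -- sum of products bound
  have hsum : ∀ n : ℕ, ∑ i ∈ Finset.range (n + 1), ∏ k ∈ Finset.Icc (i + 1) n, (1 - β k)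
      ≤ ((n : ℝ) + 1) ^ b / C_b := by
    intro n
    have h1 := telescope_le_one β hβ0 (fun k => (hβ1 k).le) n
    have h2 : β n * ∑ i ∈ Finset.range (n + 1), ∏ k ∈ Finset.Icc (i + 1) n, (1 - β k) ≤ 1 := by
      rw [Finset.mul_sum]
      refine le_trans (Finset.sum_le_sum ?_) h1
      intro i hi
      rw [mul_comm]
      refine mul_le_mul_of_nonneg_left (hβmono i n (by simpa [Nat.lt_succ_iff] using hi)) ?_
      exact Finset.prod_nonneg fun k _ => by linarith [(hβ1 k).le]
    have hkey : β n * (((n : ℝ) + 1) ^ b / C_b) = 1 := by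
      rw [hβ, Real.rpow_neg (by positivity)]
      field_simp
    have hbn := hβpos n
    calc ∑ i ∈ Finset.range (n + 1), ∏ k ∈ Finset.Icc (i + 1) n, (1 - β k)
        ≤ 1 / β n := by rw [le_div_iff₀ hbn]; linarith
      _ = ((n : ℝ) + 1) ^ b / C_b := by
          rw [hβ, Real.rpow_neg (by positivity), one_div, mul_inv, inv_inv]
          ring
  refine ⟨1, fun n => C_p * (((n : ℝ) + 1) * Real.exp (-(C_b / 4 * ((n : ℝ) + 1) ^ (1 - b)))),
    ?_, ?_, ?_⟩
  · have h := (aux_tendsto 1 (C_b / 4) (1 - b) (by positivity) (by linarith)).const_mul C_p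
    simpa [Real.rpow_one] using h
  · have h := (aux_tendsto (r + 1) (C_b / 4) (1 - b) (by positivity) (by linarith)).const_mul C_p
    rw [mul_zero] at h
    refine h.congr fun n => ?_
    rw [Real.rpow_add (by positivity), Real.rpow_one]
    ring
  · intro n hn
    set m := n / 2 with hm
    have hmn : m + 1 ≤ n + 1 := by omega
    have hmn' : m ≤ n := by omega
    have hprod_nonneg : ∀ s : Finset ℕ, (0 : ℝ) ≤ ∏ k ∈ s, (1 - β k) :=
      fun s => Finset.prod_nonneg fun k _ => by linarith [(hβ1 k).le]
    -- split the sum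
    have hsplit : S n = (∑ i ∈ Finset.range (m + 1),
          (∏ k ∈ Finset.Icc (i + 1) n, (1 - β k)) * P i)
        + ∑ i ∈ Finset.Ico (m + 1) (n + 1),
          (∏ k ∈ Finset.Icc (i + 1) n, (1 - β k)) * P i := by
      rw [hS, Finset.range_eq_Ico,
        ← Finset.sum_Ico_consecutive _ (Nat.zero_le (m + 1)) hmn]
      rw [Finset.range_eq_Ico]
    -- tail bound
    have htail : ∑ i ∈ Finset.Ico (m + 1) (n + 1),
        (∏ k ∈ Finset.Icc (i + 1) n, (1 - β k)) * P i
        ≤ C_p * 2 ^ p * ((n : ℝ) + 1) ^ b / (C_b * ((n : ℝ) + 2) ^ p) := by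
      have hPle : ∀ i ∈ Finset.Ico (m + 1) (n + 1),
          P i ≤ C_p * ((((n : ℝ) + 2) / 2) ^ (-p)) := by
        intro i hi
        rw [hP]
        refine mul_le_mul_of_nonneg_left ?_ hCp.le
        refine Real.rpow_le_rpow_of_nonpos (by positivity) ?_ (neg_nonpos.mpr hp.le)
        have h1 : (m : ℝ) + 1 ≤ (i : ℝ) := by
          exact_mod_cast (Finset.mem_Ico.mp hi).1
        have h2 : (n : ℝ) ≤ 2 * (m : ℝ) + 1 := by
          have : n ≤ 2 * m + 1 := by omega
          exact_mod_cast this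
        linarith
      have step1 : ∑ i ∈ Finset.Ico (m + 1) (n + 1),
          (∏ k ∈ Finset.Icc (i + 1) n, (1 - β k)) * P i
          ≤ (C_p * ((((n : ℝ) + 2) / 2) ^ (-p))) *
            ∑ i ∈ Finset.Ico (m + 1) (n + 1), ∏ k ∈ Finset.Icc (i + 1) n, (1 - β k) := by
        rw [Finset.mul_sum]
        refine Finset.sum_le_sum fun i hi => ?_
        rw [mul_comm (C_p * _)]
        exact mul_le_mul_of_nonneg_left (hPle i hi) (hprod_nonneg _)
      have step2 : ∑ i ∈ Finset.Ico (m + 1) (n + 1), ∏ k ∈ Finset.Icc (i + 1) n, (1 - β k)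
          ≤ ((n : ℝ) + 1) ^ b / C_b := by
        refine le_trans ?_ (hsum n)
        rw [Finset.range_eq_Ico]
        refine Finset.sum_le_sum_of_subset_of_nonneg ?_ (fun i _ _ => hprod_nonneg _)
        exact Finset.Ico_subset_Ico (Nat.zero_le _) le_rfl
      have hC2 : (0 : ℝ) < C_p * ((((n : ℝ) + 2) / 2) ^ (-p)) := by positivity
      have := le_trans step1 (mul_le_mul_of_nonneg_left step2 hC2.le)
      refine this.trans_eq ?_
      have hd : (((n : ℝ) + 2) / 2) ^ (-p) = 2 ^ p / ((n : ℝ) + 2) ^ p := by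
        rw [Real.div_rpow (by positivity) (by positivity), Real.rpow_neg (by positivity),
          Real.rpow_neg (by positivity)]
        rw [div_eq_mul_inv, inv_inv, ← div_eq_inv_mul]
      rw [hd]
      have hnp : (0 : ℝ) < ((n : ℝ) + 2) ^ p := by positivity
      field_simp
    -- head bound
    have hhead : ∑ i ∈ Finset.range (m + 1),
        (∏ k ∈ Finset.Icc (i + 1) n, (1 - β k)) * P i
        ≤ C_p * (((n : ℝ) + 1) * Real.exp (-(C_b / 4 * ((n : ℝ) + 1) ^ (1 - b)))) := by
      have hPle1 : ∀ i : ℕ, P i ≤ C_p := by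
        intro i
        rw [hP]
        nth_rewrite 2 [← mul_one C_p]
        refine mul_le_mul_of_nonneg_left ?_ hCp.le
        refine Real.rpow_le_one_of_one_le_of_nonpos ?_ (neg_nonpos.mpr hp.le)
        have : (0 : ℝ) ≤ (i : ℝ) := Nat.cast_nonneg i
        linarith
      have hP0 : ∀ i : ℕ, 0 ≤ P i := by
        intro i; rw [hP]; positivity
      have hQ : ∀ i ∈ Finset.range (m + 1),
          (∏ k ∈ Finset.Icc (i + 1) n, (1 - β k))
            ≤ ∏ k ∈ Finset.Ioc m n, (1 - β k) := by
        intro i hi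
        have him : i ≤ m := by simpa [Nat.lt_succ_iff] using hi
        rw [Finset.Icc_add_one_left_eq_Ioc, ← Finset.prod_Ioc_consecutive _ him hmn']
        nth_rewrite 2 [← one_mul (∏ k ∈ Finset.Ioc m n, (1 - β k))]
        refine mul_le_mul_of_nonneg_right ?_ (hprod_nonneg _)
        refine Finset.prod_le_one (fun k _ => by linarith [(hβ1 k).le]) ?_
        intro k _; linarith [hβpos k]
      -- product bound by exponential
      have hprodexp : ∏ k ∈ Finset.Ioc m n, (1 - β k)
          ≤ Real.exp (-(C_b / 4 * ((n : ℝ) + 1) ^ (1 - b))) := by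
        have e1 : ∏ k ∈ Finset.Ioc m n, (1 - β k)
            ≤ ∏ k ∈ Finset.Ioc m n, Real.exp (-β k) := by
          refine Finset.prod_le_prod (fun k _ => by linarith [(hβ1 k).le]) ?_
          intro k _
          have := Real.add_one_le_exp (-β k)
          linarith
        have e2 : ∏ k ∈ Finset.Ioc m n, Real.exp (-β k)
            = Real.exp (∑ k ∈ Finset.Ioc m n, -β k) := (Real.exp_sum _ _).symm
        have e3 : ∑ k ∈ Finset.Ioc m n, β k ≥ ((n : ℝ) - m) * β n := by
          have : ∀ k ∈ Finset.Ioc m n, β n ≤ β k := by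
            intro k hk
            exact hβmono k n (Finset.mem_Ioc.mp hk).2
          have hcard := Finset.card_nsmul_le_sum (Finset.Ioc m n) β (β n) this
          rw [Nat.card_Ioc] at hcard
          have : ((n - m : ℕ) : ℝ) = (n : ℝ) - m := by
            have := Nat.cast_sub hmn' (R := ℝ); exact this
          rw [nsmul_eq_mul, this] at hcard
          exact hcard
        have e4 : C_b / 4 * ((n : ℝ) + 1) ^ (1 - b) ≤ ((n : ℝ) - m) * β n := by
          rw [hβ]
          have hrw : ((n : ℝ) + 1) ^ (1 - b) = ((n : ℝ) + 1) * ((n : ℝ) + 1) ^ (-b) := by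
            nth_rewrite 2 [← Real.rpow_one ((n : ℝ) + 1)]
            rw [← Real.rpow_add (by positivity)]
            congr 1
          rw [hrw]
          have hm2 : (m : ℝ) ≤ (n : ℝ) / 2 := by
            have : 2 * m ≤ n := by omega
            have := (Nat.cast_le (α := ℝ)).mpr this
            push_cast at this
            linarith
          have hn1 : (1 : ℝ) ≤ (n : ℝ) := by exact_mod_cast hn
          have hfac : C_b / 4 * ((n : ℝ) + 1) ≤ ((n : ℝ) - m) * C_b := by
            nlinarith
          have hpow : (0 : ℝ) < ((n : ℝ) + 1) ^ (-b) := by positivity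
          nlinarith [hpow]
        calc ∏ k ∈ Finset.Ioc m n, (1 - β k)
            ≤ Real.exp (∑ k ∈ Finset.Ioc m n, -β k) := e1.trans_eq e2
          _ ≤ Real.exp (-(C_b / 4 * ((n : ℝ) + 1) ^ (1 - b))) := by
              apply Real.exp_le_exp.mpr
              rw [Finset.sum_neg_distrib]
              linarith
      calc ∑ i ∈ Finset.range (m + 1), (∏ k ∈ Finset.Icc (i + 1) n, (1 - β k)) * P i
          ≤ ∑ i ∈ Finset.range (m + 1),
              (∏ k ∈ Finset.Ioc m n, (1 - β k)) * C_p := by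
            refine Finset.sum_le_sum fun i hi => ?_
            refine mul_le_mul (hQ i hi) (hPle1 i) (hP0 i) (hprod_nonneg _)
        _ = (m + 1 : ℕ) * ((∏ k ∈ Finset.Ioc m n, (1 - β k)) * C_p) := by
            rw [Finset.sum_const, Finset.card_range, nsmul_eq_mul]
        _ ≤ ((n : ℝ) + 1) * (Real.exp (-(C_b / 4 * ((n : ℝ) + 1) ^ (1 - b))) * C_p) := by
            refine mul_le_mul ?_ ?_ (mul_nonneg (hprod_nonneg _) hCp.le) (by positivity)
            · have : (m : ℝ) ≤ n := by exact_mod_cast hmn'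
              push_cast; linarith
            · exact mul_le_mul_of_nonneg_right hprodexp hCp.le
        _ = C_p * (((n : ℝ) + 1) * Real.exp (-(C_b / 4 * ((n : ℝ) + 1) ^ (1 - b)))) := by ring
    -- combine
    have hterm : (0 : ℝ) ≤ C_p * 2 ^ p * ((n : ℝ) + 1) ^ b / (C_b * ((n : ℝ) + 2) ^ p) := by
      positivity
    rw [hsplit]
    have : C_p * 2 ^ p * ((n : ℝ) + 1) ^ b / (C_b * ((n : ℝ) + 2) ^ p)
        ≤ 3 * C_p * 2 ^ p * ((n : ℝ) + 1) ^ b / (C_b * ((n : ℝ) + 2) ^ p) := by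
      apply div_le_div_of_nonneg_right ?_ (by positivity)
      · have hpos3 : (0 : ℝ) < C_p * 2 ^ p * ((n : ℝ) + 1) ^ b := by positivity
        linarith
    linarith [hhead, htail, this]
end

section
/- Let (α_k) be a nonnegative real sequence with Σ_{k≥1} α_k² < ∞, and let (τ_n^{(w)}) be nonnegative integer-valued random variables on a probability space, all dominated almost surely by an integer-valued random variable τ with E[τ²] < ∞. Then E[Σ_{n≥1} τ_n^{(w)} Σ_{k=n-τ_n^{(w)}}^{n-1} α_k²] ≤ E[τ²] · Σ_{k≥1} α_k², and in particular the random series Σ_{n≥1} τ_n^{(w)} Σ_{k=n-τ_n^{(w)}}^{n-1} α_k² is finite almost surely. -/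
open MeasureTheory ENNReal

/-!
Fix ω outside the null set where some `τₙ ω > τ ω`. Enlarging every weight `τₙ ω` to `t = τ ω` and
every window `[n + 1 - τₙ ω, n + 1)` to `[n + 1 - t, n + 1)` only increases the series. Exchanging
the two sums, each `α k ^ 2` lies in exactly `t` of the enlarged windows, so the series is at most
`t ^ 2 * ∑ α k ^ 2`, which is finite; integrating this bound gives the inequality of expectations.
-/

theorem ENNReal.tsum_sum_Ico_sub_eq_mul_tsum (x : ℕ → ℝ≥0∞) (t : ℕ) :
    ∑' n, ∑ k ∈ Finset.Ico (n + 1 - t) (n + 1), x k = t * ∑' k, x k := by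
  have window_iff : ∀ k n, k ∈ Finset.Ico (n + 1 - t) (n + 1) ↔ n ∈ Finset.Ico k (k + t) := by
    intro k n; simp only [Finset.mem_Ico]; omega
  calc ∑' n, ∑ k ∈ Finset.Ico (n + 1 - t) (n + 1), x k
      = ∑' n, ∑' k, (Finset.Ico k (k + t) : Set ℕ).indicator (fun _ => x k) n := by
        refine tsum_congr fun n => ?_
        rw [sum_eq_tsum_indicator]
        refine tsum_congr fun k => ?_
        simp only [Set.indicator, Finset.mem_coe, window_iff]
    _ = ∑' k, ∑' n, (Finset.Ico k (k + t) : Set ℕ).indicator (fun _ => x k) n := ENNReal.tsum_comm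
    _ = ∑' k, t * x k := by
        refine tsum_congr fun k => ?_
        rw [← sum_eq_tsum_indicator, Finset.sum_const, Nat.card_Ico, nsmul_eq_mul,
          add_tsub_cancel_left]
    _ = t * ∑' k, x k := ENNReal.tsum_mul_left

theorem ENNReal.tsum_mul_sum_Ico_le_sq_mul_tsum (x : ℕ → ℝ≥0∞) {s : ℕ → ℕ} {t : ℕ}
    (hs : ∀ n, s n ≤ t) :
    ∑' n, (s (n + 1) : ℝ≥0∞) * ∑ k ∈ Finset.Ico (max 1 (n + 1 - s (n + 1))) (n + 1), x k
      ≤ t ^ 2 * ∑' k, x k := by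
  calc ∑' n, (s (n + 1) : ℝ≥0∞) * ∑ k ∈ Finset.Ico (max 1 (n + 1 - s (n + 1))) (n + 1), x k
      ≤ ∑' n, (t : ℝ≥0∞) * ∑ k ∈ Finset.Ico (n + 1 - t) (n + 1), x k := by
        gcongr with n
        · exact hs _
        · exact le_max_of_le_right (Nat.sub_le_sub_left (hs _) _)
    _ = t ^ 2 * ∑' k, x k := by
        rw [ENNReal.tsum_mul_left, ENNReal.tsum_sum_Ico_sub_eq_mul_tsum, ← mul_assoc, sq]

theorem stmt_6_general {Ω : Type*} [MeasurableSpace Ω] (P : Measure Ω)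
    (α : ℕ → ℝ) (hsum : Summable (fun k => α k ^ 2))
    (τn : ℕ → Ω → ℕ)
    (τ : Ω → ℕ)
    (hdom : ∀ n, ∀ᵐ ω ∂P, τn n ω ≤ τ ω) :
    (∫⁻ ω, ∑' n : ℕ, (τn (n + 1) ω : ℝ≥0∞) *
        ∑ k ∈ Finset.Ico (max 1 ((n + 1) - τn (n + 1) ω)) (n + 1),
          ENNReal.ofReal (α k ^ 2) ∂P)
      ≤ (∫⁻ ω, ((τ ω : ℝ≥0∞)) ^ 2 ∂P) * ENNReal.ofReal (∑' k, α k ^ 2) ∧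
    (∀ᵐ ω ∂P, (∑' n : ℕ, (τn (n + 1) ω : ℝ≥0∞) *
        ∑ k ∈ Finset.Ico (max 1 ((n + 1) - τn (n + 1) ω)) (n + 1),
          ENNReal.ofReal (α k ^ 2)) < ⊤) := by
  have hsum_ne_top : ∑' k, ENNReal.ofReal (α k ^ 2) ≠ ∞ := by
    rw [← ENNReal.ofReal_tsum_of_nonneg (fun k => sq_nonneg _) hsum]
    exact ofReal_ne_top
  rw [ENNReal.ofReal_tsum_of_nonneg (fun k => sq_nonneg _) hsum]
  have hbound := (ae_all_iff.2 hdom).mono fun ω hω =>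
    ENNReal.tsum_mul_sum_Ico_le_sq_mul_tsum (fun k => ENNReal.ofReal (α k ^ 2)) hω
  refine ⟨(lintegral_mono_ae hbound).trans_eq (lintegral_mul_const' _ _ hsum_ne_top), ?_⟩
  filter_upwards [hbound] with ω hω
  exact hω.trans_lt (mul_lt_top (by simp) hsum_ne_top.lt_top)

theorem stmt_6 {Ω : Type*} [MeasurableSpace Ω] (P : Measure Ω) [IsProbabilityMeasure P]
    (α : ℕ → ℝ) (hα : ∀ k, 0 ≤ α k) (hsum : Summable (fun k => α k ^ 2))
    (τn : ℕ → Ω → ℕ) (hτn : ∀ n, Measurable (τn n))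
    (τ : Ω → ℕ) (hτ : Measurable τ)
    (hdom : ∀ n, ∀ᵐ ω ∂P, τn n ω ≤ τ ω)
    (hτ2 : ∫⁻ ω, ((τ ω : ℝ≥0∞)) ^ 2 ∂P < ⊤) :
    (∫⁻ ω, ∑' n : ℕ, (τn (n + 1) ω : ℝ≥0∞) *
        ∑ k ∈ Finset.Ico (max 1 ((n + 1) - τn (n + 1) ω)) (n + 1),
          ENNReal.ofReal (α k ^ 2) ∂P)
      ≤ (∫⁻ ω, ((τ ω : ℝ≥0∞)) ^ 2 ∂P) * ENNReal.ofReal (∑' k, α k ^ 2) ∧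
    (∀ᵐ ω ∂P, (∑' n : ℕ, (τn (n + 1) ω : ℝ≥0∞) *
        ∑ k ∈ Finset.Ico (max 1 ((n + 1) - τn (n + 1) ω)) (n + 1),
          ENNReal.ofReal (α k ^ 2)) < ⊤) :=
  stmt_6_general P α hsum τn τ hdom
end
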